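/- arXiv:1511.06123 — 3 statements merged into one kernel-verified Lean document; each statement's English description precedes it below -/
import Mathlib

section
/- The quantity I(x, v) = ⟨x, A⁻¹v⟩ is (up to sign) preserved by the billiard map in the quadric ⟨x, A⁻¹x⟩ = 1: if x, x' lie on the quadric, x' = x + μv with μ ≠ 0, v a unit vector, and v' = v + ν A⁻¹x' with ν ≠ 0, v' a unit vector, then ⟨x', A⁻¹v'⟩ = ⟨x, A⁻¹v⟩. -/
open Matrix

/-- The Joachimsthal-type quantity `I(x,v) = ⟨x, A⁻¹v⟩` is preserved by the
billiard map in the quadric `⟨x, A⁻¹x⟩ = 1`: if `x, x'` lie on the quadric,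
`x' = x + μ v` with `μ ≠ 0`, `v` a unit vector, and `v' = v + ν A⁻¹x'` with
`ν ≠ 0`, `v'` a unit vector, then `⟨x', A⁻¹v'⟩ = ⟨x, A⁻¹v⟩`. -/
theorem billiard_integral {n : ℕ}
    (A : Matrix (Fin n) (Fin n) ℝ) (hA : A.IsSymm) (hdet : IsUnit A.det)
    (x x' v v' : Fin n → ℝ) (μ ν : ℝ) (hμ : μ ≠ 0) (hν : ν ≠ 0)
    (hx : x ⬝ᵥ A⁻¹ *ᵥ x = 1) (hx' : x' ⬝ᵥ A⁻¹ *ᵥ x' = 1)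
    (hline : x' = x + μ • v)
    (hv : v ⬝ᵥ v = 1) (hv' : v' ⬝ᵥ v' = 1)
    (hrefl : v' = v + ν • (A⁻¹ *ᵥ x')) :
    x' ⬝ᵥ A⁻¹ *ᵥ v' = x ⬝ᵥ A⁻¹ *ᵥ v := by
  set B := A⁻¹ with hB
  have hBsymm : Bᵀ = B := by
    rw [hB, transpose_nonsing_inv, hA.eq]
  have sym : ∀ u w : Fin n → ℝ, u ⬝ᵥ B *ᵥ w = w ⬝ᵥ B *ᵥ u := by
    intro u w
    rw [dotProduct_comm, dotProduct_mulVec, ← mulVec_transpose, hBsymm]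
  -- expand hx'
  have h1 : 2 * μ * (x ⬝ᵥ B *ᵥ v) + μ ^ 2 * (v ⬝ᵥ B *ᵥ v) = 0 := by
    have H := hx'
    rw [hline] at H
    simp only [add_dotProduct, dotProduct_add, mulVec_add, mulVec_smul,
      smul_dotProduct, dotProduct_smul, smul_eq_mul] at H
    rw [hx] at H
    have hvx : v ⬝ᵥ B *ᵥ x = x ⬝ᵥ B *ᵥ v := sym v x
    linear_combination H - μ * hvx
  have h2' : 2 * (x' ⬝ᵥ B *ᵥ v) + ν * ((B *ᵥ x') ⬝ᵥ (B *ᵥ x')) = 0 := by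
    have H := hv'
    rw [hrefl] at H
    simp only [add_dotProduct, dotProduct_add, smul_dotProduct, dotProduct_smul,
      smul_eq_mul] at H
    rw [hv] at H
    have hsw : (B *ᵥ x') ⬝ᵥ v = v ⬝ᵥ (B *ᵥ x') := dotProduct_comm _ _
    have hvx' : v ⬝ᵥ (B *ᵥ x') = x' ⬝ᵥ B *ᵥ v := sym v x'
    have key : ν * (2 * (x' ⬝ᵥ B *ᵥ v) + ν * ((B *ᵥ x') ⬝ᵥ (B *ᵥ x'))) = 0 := by
      linear_combination H - ν * hsw - 2 * ν * hvx'
    exact (mul_eq_zero.mp key).resolve_left hν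
  -- key: x' ⬝ᵥ B *ᵥ (B *ᵥ x') = (B *ᵥ x') ⬝ᵥ (B *ᵥ x')
  have h3 : x' ⬝ᵥ B *ᵥ (B *ᵥ x') = (B *ᵥ x') ⬝ᵥ (B *ᵥ x') := by
    rw [sym x' (B *ᵥ x'), dotProduct_comm]
  -- x' ⬝ᵥ B v = - x ⬝ᵥ B v
  have h4 : x' ⬝ᵥ B *ᵥ v = -(x ⬝ᵥ B *ᵥ v) := by
    rw [hline]
    simp only [add_dotProduct, smul_dotProduct, smul_eq_mul]
    have key : μ * (2 * (x ⬝ᵥ B *ᵥ v) + μ * (v ⬝ᵥ B *ᵥ v)) = 0 := by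
      linear_combination h1
    have h1' := (mul_eq_zero.mp key).resolve_left hμ
    linarith
  rw [hrefl]
  simp only [dotProduct_add, mulVec_add, mulVec_smul, dotProduct_smul, smul_eq_mul]
  rw [h3]
  linarith [h2', h4]
end

section
/- Let a_1², …, a_n² be pairwise distinct real numbers and λ a real number with λ + a_i² ≠ 0 for all i. Then for all x, v ∈ ℝⁿ: (Σ_i x_iv_i/(λ+a_i²))² − (Σ_i v_i²/(λ+a_i²))·(Σ_i x_i²/(λ+a_i²)) = Σ_i (1/(λ+a_i²)) Σ_{j≠i} (x_iv_j − x_jv_i)²/(a_i² − a_j²). -/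
open BigOperators Finset

/-- Symmetrization: two double sums over off-diagonal pairs agree if the
symmetrized terms agree. -/
lemma sum_erase_symm {n : ℕ} (F G : Fin n → Fin n → ℝ)
    (h : ∀ i j, i ≠ j → F i j + F j i = G i j + G j i) :
    ∑ i, ∑ j ∈ univ.erase i, F i j = ∑ i, ∑ j ∈ univ.erase i, G i j := by
  have swap : ∀ (T : Fin n → Fin n → ℝ),
      ∑ i, ∑ j ∈ univ.erase i, T i j = ∑ i, ∑ j ∈ univ.erase i, T j i := by
    intro T
    have e : ∀ i : Fin n, (univ.erase i) = univ.filter (fun j => j ≠ i) := by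
      intro i; rw [Finset.filter_ne']
    simp only [e, Finset.sum_filter]
    rw [Finset.sum_comm]
    refine Finset.sum_congr rfl fun i _ => Finset.sum_congr rfl fun j _ => ?_
    simp [ne_comm]
  have h2 : (2 : ℝ) * (∑ i, ∑ j ∈ univ.erase i, F i j)
      = 2 * (∑ i, ∑ j ∈ univ.erase i, G i j) := by
    calc (2 : ℝ) * (∑ i, ∑ j ∈ univ.erase i, F i j)
        = (∑ i, ∑ j ∈ univ.erase i, F i j) + (∑ i, ∑ j ∈ univ.erase i, F j i) := by
          rw [← swap F]; ring
      _ = ∑ i, ∑ j ∈ univ.erase i, (F i j + F j i) := by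
          rw [← Finset.sum_add_distrib]
          exact Finset.sum_congr rfl fun i _ => (Finset.sum_add_distrib).symm
      _ = ∑ i, ∑ j ∈ univ.erase i, (G i j + G j i) := by
          refine Finset.sum_congr rfl fun i _ => Finset.sum_congr rfl fun j hj => ?_
          exact h i j (fun hij => (Finset.ne_of_mem_erase hj) hij.symm)
      _ = (∑ i, ∑ j ∈ univ.erase i, G i j) + (∑ i, ∑ j ∈ univ.erase i, G j i) := by
          rw [← Finset.sum_add_distrib]
          exact Finset.sum_congr rfl fun i _ => Finset.sum_add_distrib
      _ = 2 * (∑ i, ∑ j ∈ univ.erase i, G i j) := by rw [← swap G]; ring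
  linarith

/-- The partial-fraction identity splitting `Q_λ(x,v)² − Q_λ(v)Q_λ(x)` into the
classical integrals `F_i`. -/
theorem partial_fraction_split {n : ℕ} (a : Fin n → ℝ)
    (hdist : ∀ i j, i ≠ j → (a i) ^ 2 ≠ (a j) ^ 2)
    (lam : ℝ) (hlam : ∀ i, lam + (a i) ^ 2 ≠ 0)
    (x v : Fin n → ℝ) :
    (∑ i, x i * v i / (lam + (a i) ^ 2)) ^ 2
      - (∑ i, (v i) ^ 2 / (lam + (a i) ^ 2)) * (∑ i, (x i) ^ 2 / (lam + (a i) ^ 2))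
    = ∑ i, (1 / (lam + (a i) ^ 2)) *
        ∑ j ∈ univ.erase i, (x i * v j - x j * v i) ^ 2 / ((a i) ^ 2 - (a j) ^ 2) := by
  set D : Fin n → ℝ := fun i => lam + (a i) ^ 2 with hD
  have expand : (∑ i, x i * v i / D i) ^ 2
      - (∑ i, (v i) ^ 2 / D i) * (∑ i, (x i) ^ 2 / D i)
      = ∑ i, ∑ j, ((x i * v i / D i) * (x j * v j / D j)
          - ((v i) ^ 2 / D i) * ((x j) ^ 2 / D j)) := by
    rw [sq, Finset.sum_mul_sum, Finset.sum_mul_sum, ← Finset.sum_sub_distrib]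
    exact Finset.sum_congr rfl fun i _ => (Finset.sum_sub_distrib _ _).symm
  rw [expand]
  have drop : ∑ i, ∑ j, ((x i * v i / D i) * (x j * v j / D j)
          - ((v i) ^ 2 / D i) * ((x j) ^ 2 / D j))
      = ∑ i, ∑ j ∈ univ.erase i, ((x i * v i / D i) * (x j * v j / D j)
          - ((v i) ^ 2 / D i) * ((x j) ^ 2 / D j)) := by
    refine Finset.sum_congr rfl fun i _ => ?_
    rw [← Finset.add_sum_erase univ _ (Finset.mem_univ i)]
    have : (x i * v i / D i) * (x i * v i / D i)
        - ((v i) ^ 2 / D i) * ((x i) ^ 2 / D i) = 0 := by ring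
    rw [this, zero_add]
  rw [drop]
  have rhs : ∑ i, (1 / D i) *
        ∑ j ∈ univ.erase i, (x i * v j - x j * v i) ^ 2 / ((a i) ^ 2 - (a j) ^ 2)
      = ∑ i, ∑ j ∈ univ.erase i,
          (1 / D i) * ((x i * v j - x j * v i) ^ 2 / ((a i) ^ 2 - (a j) ^ 2)) := by
    exact Finset.sum_congr rfl fun i _ => Finset.mul_sum _ _ _
  rw [rhs]
  apply sum_erase_symm
  intro i j hij
  have hDi : D i ≠ 0 := hlam i
  have hDj : D j ≠ 0 := hlam j
  have hij' : (a i) ^ 2 - (a j) ^ 2 ≠ 0 := sub_ne_zero.mpr (hdist i j hij)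
  have hji' : (a j) ^ 2 - (a i) ^ 2 ≠ 0 := sub_ne_zero.mpr (hdist j i hij.symm)
  have hsub : (a i) ^ 2 - (a j) ^ 2 = D i - D j := by simp [hD]
  have hsub' : (a j) ^ 2 - (a i) ^ 2 = D j - D i := by simp [hD]
  rw [hsub, hsub']
  have h1 : D i - D j ≠ 0 := hsub ▸ hij'
  have h2 : D j - D i ≠ 0 := hsub' ▸ hji'
  field_simp
  ring
end

section
/- Let x, x', v ∈ ℝⁿ with v a unit vector, x' = x + μv (μ ≠ 0), both x and x' on Q_λ = {y : Σ y_i²/(λ+a_i²) = 1}, and let v' = v + ν(A+λI)⁻¹x' (ν ≠ 0) be a unit vector. Then for every i, the Moser integral F_i is preserved: F_i(x', v') = F_i(x', v) and F_i(x', v) = F_i(x, v), where F_i(x,v) = v_i² + Σ_{j≠i}(x_iv_j − x_jv_i)²/(a_i² − a_j²). -/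
open Matrix BigOperators Finset

/-- The Moser integrals `F_i(x,v) = v_i² + Σ_{j≠i}(x_iv_j − x_jv_i)²/(a_i² − a_j²)`
are preserved by the billiard map in the confocal quadric `Q_λ`:
`F_i(x',v') = F_i(x',v)` and `F_i(x',v) = F_i(x,v)`. -/
theorem moser_integrals_billiard_invariant {n : ℕ} (a : Fin n → ℝ)
    (hdist : ∀ i j, i ≠ j → (a i) ^ 2 ≠ (a j) ^ 2)
    (lam : ℝ) (hlam : ∀ i, lam + (a i) ^ 2 ≠ 0)
    (F : (Fin n → ℝ) → (Fin n → ℝ) → Fin n → ℝ)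
    (hF : ∀ y w i, F y w i =
      (w i) ^ 2 + ∑ j ∈ univ.erase i, (y i * w j - y j * w i) ^ 2 / ((a i) ^ 2 - (a j) ^ 2))
    (x x' v v' : Fin n → ℝ) (μ ν : ℝ) (hμ : μ ≠ 0) (hν : ν ≠ 0)
    (hv : v ⬝ᵥ v = 1) (hv' : v' ⬝ᵥ v' = 1)
    (hx : ∑ i, (x i) ^ 2 / (lam + (a i) ^ 2) = 1)
    (hx' : ∑ i, (x' i) ^ 2 / (lam + (a i) ^ 2) = 1)
    (hline : x' = x + μ • v)
    (hrefl : v' = v + ν • ((Matrix.diagonal (fun i => (a i) ^ 2) + lam • (1 : Matrix (Fin n) (Fin n) ℝ))⁻¹ *ᵥ x')) :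
    ∀ i, F x' v' i = F x' v i ∧ F x' v i = F x v i := by
  -- notation
  set d : Fin n → ℝ := fun j => lam + a j ^ 2 with hd_def
  have hd : ∀ j, d j ≠ 0 := hlam
  set c : Fin n → ℝ := fun j => x' j / d j with hc_def
  -- the matrix is diagonal with entries `d`
  have hM : (Matrix.diagonal (fun i => (a i) ^ 2) + lam • (1 : Matrix (Fin n) (Fin n) ℝ))
      = Matrix.diagonal d := by
    ext i j
    by_cases h : i = j <;>
      simp [Matrix.diagonal_apply, Matrix.one_apply, h, hd_def] <;> ring
  have hinv : (Matrix.diagonal d)⁻¹ = Matrix.diagonal (fun j => (d j)⁻¹) := by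
    apply Matrix.inv_eq_right_inv
    rw [Matrix.diagonal_mul_diagonal]
    have : (fun i => d i * (d i)⁻¹) = fun _ => (1 : ℝ) :=
      funext fun i => mul_inv_cancel₀ (hd i)
    rw [this, Matrix.diagonal_one]
  have hv'c : v' = fun j => v j + ν * c j := by
    rw [hrefl, hM, hinv]
    funext j
    simp [Matrix.mulVec_diagonal, hc_def, div_eq_inv_mul]
  -- key scalar identities
  have hone : ∑ j, x' j * c j = 1 := by
    rw [← hx']
    exact Finset.sum_congr rfl fun j _ => by rw [hc_def]; ring
  set S : ℝ := ∑ j, v j * c j with hS_def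
  set C : ℝ := ∑ j, c j * c j with hC_def
  have hkey : 2 * S + ν * C = 0 := by
    rw [hv'c] at hv'
    simp only [dotProduct] at hv hv'
    have expand : ∀ j ∈ (univ : Finset (Fin n)),
        (v j + ν * c j) * (v j + ν * c j)
          = v j * v j + 2 * ν * (v j * c j) + ν ^ 2 * (c j * c j) := fun j _ => by ring
    rw [Finset.sum_congr rfl expand, Finset.sum_add_distrib, Finset.sum_add_distrib,
      ← Finset.mul_sum, ← Finset.mul_sum, ← hS_def, ← hC_def, hv] at hv'
    have h0 : ν * (2 * S + ν * C) = 0 := by nlinarith [hv']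
    rcases mul_eq_zero.mp h0 with h | h
    · exact absurd h hν
    · exact h
  intro i
  constructor
  · -- F x' v' i = F x' v i
    rw [hF, hF, hv'c]
    have hsum : ∀ j ∈ univ.erase i,
        (x' i * (v j + ν * c j) - x' j * (v i + ν * c i)) ^ 2 / ((a i) ^ 2 - (a j) ^ 2)
          = (x' i * v j - x' j * v i) ^ 2 / ((a i) ^ 2 - (a j) ^ 2)
            + (2 * ν * c i) * (x' i * (v j * c j) - v i * (x' j * c j))
            + ν ^ 2 * ((c i * x' i) * (c j * c j) - (c i * c i) * (x' j * c j)) := by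
      intro j hj
      have hji : j ≠ i := (Finset.mem_erase.mp hj).1
      have hne : (a i) ^ 2 - (a j) ^ 2 ≠ 0 := sub_ne_zero.mpr (hdist i j hji.symm)
      have hdi := hd i
      have hdj := hd j
      rw [hc_def]
      simp only [hd_def] at hdi hdj ⊢
      field_simp
      ring
    rw [Finset.sum_congr rfl hsum, Finset.sum_add_distrib, Finset.sum_add_distrib,
      ← Finset.mul_sum, ← Finset.mul_sum]
    have e1 : ∑ j ∈ univ.erase i, (x' i * (v j * c j) - v i * (x' j * c j))
        = x' i * (S - v i * c i) - v i * (1 - x' i * c i) := by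
      rw [Finset.sum_sub_distrib, ← Finset.mul_sum, ← Finset.mul_sum,
        Finset.sum_erase_eq_sub (Finset.mem_univ i),
        Finset.sum_erase_eq_sub (Finset.mem_univ i), ← hS_def, hone]
    have e2 : ∑ j ∈ univ.erase i, ((c i * x' i) * (c j * c j) - (c i * c i) * (x' j * c j))
        = (c i * x' i) * (C - c i * c i) - (c i * c i) * (1 - x' i * c i) := by
      rw [Finset.sum_sub_distrib, ← Finset.mul_sum, ← Finset.mul_sum,
        Finset.sum_erase_eq_sub (Finset.mem_univ i),
        Finset.sum_erase_eq_sub (Finset.mem_univ i), ← hC_def, hone]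
    rw [e1, e2]
    linear_combination (ν * c i * x' i) * hkey
  · -- F x' v i = F x v i
    rw [hF, hF]
    congr 1
    refine Finset.sum_congr rfl fun j _ => ?_
    have : x' i * v j - x' j * v i = x i * v j - x j * v i := by
      rw [hline]; simp only [Pi.add_apply, Pi.smul_apply, smul_eq_mul]; ring
    rw [this]
end
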